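/- Let X ≥ 2 and σ > 1/2 be real numbers. Call a positive integer X-admissible if it is squarefree and all of its prime factors are strictly less than X. Then ζ(2σ) · Σ μ(m)μ(n) · k₁^{-4σ} k₂^{-6σ} c^{-6σ} s₂^{-4σ} s₁^{-2σ} m^{-2σ} n^{-2σ}, where the (finite) sum runs over all 7-tuples (k₁, k₂, c, s₂, s₁, m, n) of pairwise coprime X-admissible positive integers, equals ∏_{p prime, p ≥ X} (1 − p^{-2σ})^{-1} · ∏_{p prime, p < X} (1 + 2(p^{2σ}+1)/(p^{4σ}(p^{2σ}−1))). -/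

import Mathlib

open scoped Classical

/-- A positive integer is `X`-admissible if it is squarefree and all of its prime
factors are strictly less than `X`. -/
def XAdmissible (X : ℝ) (n : ℕ) : Prop :=
  Squarefree n ∧ ∀ p : ℕ, p.Prime → p ∣ n → (p : ℝ) < X

/-!
Pairwise coprime squarefree tuples whose prime factors lie in a finite set of primes `P` are in
bijection with the maps `P → Option ι` sending each prime to the coordinate it divides (or to
`none`). For multiplicative weights this turns the sevenfold sum into
`∏_{p < X} (1 + 2 p^{-4σ} + 2 p^{-6σ} - p^{-2σ})`. Splitting the Euler product of `ζ(2σ)` at `X`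
and multiplying each factor with `p < X` by `(1 - p^{-2σ})⁻¹` gives the right-hand side.
-/

open Finset

namespace Nat

section PrimeAssignment

variable {ι : Type*} {P : Finset ℕ}

def IsCoprimeSquarefreeTuple (P : Finset ℕ) (v : ι → ℕ) : Prop :=
  (∀ i, Squarefree (v i) ∧ (v i).primeFactors ⊆ P) ∧ ∀ i j, i ≠ j → Coprime (v i) (v j)

/-- Primes sent to `none` divide no entry of the tuple. -/
noncomputable def fiberProd (g : P → Option ι) (i : ι) : ℕ :=
  ∏ p ∈ univ.filter (g · = some i), (p : ℕ)

variable (hP : ∀ p ∈ P, p.Prime)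
include hP

lemma coprime_val_of_ne {p q : P} (h : p ≠ q) : Coprime p q :=
  (coprime_primes (hP p p.2) (hP q q.2)).mpr (Subtype.coe_injective.ne h)

lemma mem_primeFactors_fiberProd (g : P → Option ι) (i : ι) {p : ℕ} :
    p ∈ (fiberProd g i).primeFactors ↔ ∃ h : p ∈ P, g ⟨p, h⟩ = some i := by
  have h : fiberProd g i = ∏ p ∈ (univ.filter (g · = some i)).map (.subtype _), p :=
    by rw [fiberProd, prod_map]; rfl
  rw [h, primeFactors_prod fun p hp => ?_]
  · simp
  · obtain ⟨q, -, rfl⟩ := mem_map.mp hp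
    exact hP q q.2

lemma squarefree_fiberProd (g : P → Option ι) (i : ι) : Squarefree (fiberProd g i) :=
  squarefree_prod_of_pairwise_isCoprime
    (fun _ _ _ _ hpq => coprime_iff_isRelPrime.mp (coprime_val_of_ne hP hpq))
    fun p _ => (hP p p.2).squarefree

lemma isCoprimeSquarefreeTuple_fiberProd (g : P → Option ι) :
    IsCoprimeSquarefreeTuple P (fiberProd g) := by
  refine ⟨fun i => ⟨squarefree_fiberProd hP g i, fun p hp => ?_⟩, fun i j hij => ?_⟩
  · exact ((mem_primeFactors_fiberProd hP g i).mp hp).1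
  · rw [← disjoint_primeFactors (squarefree_fiberProd hP g i).ne_zero
      (squarefree_fiberProd hP g j).ne_zero, disjoint_left]
    rintro p hpi hpj
    obtain ⟨_, hi⟩ := (mem_primeFactors_fiberProd hP g i).mp hpi
    obtain ⟨_, hj⟩ := (mem_primeFactors_fiberProd hP g j).mp hpj
    exact hij (Option.some_injective _ (hi.symm.trans hj))

lemma fiberProd_injective : Function.Injective (fiberProd : (P → Option ι) → ι → ℕ) := by
  intro g g' h
  funext p
  refine Option.ext fun i => ?_
  have hg := mem_primeFactors_fiberProd hP g i (p := p)
  have hg' := mem_primeFactors_fiberProd hP g' i (p := p)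
  rw [h, hg'] at hg
  simpa using hg.symm

lemma exists_fiberProd_eq {v : ι → ℕ} (hv : IsCoprimeSquarefreeTuple P v) :
    ∃ g : P → Option ι, fiberProd g = v := by
  refine ⟨fun p => if h : ∃ i, (p : ℕ) ∈ (v i).primeFactors then some h.choose else none, ?_⟩
  funext i
  rw [← prod_primeFactors_of_squarefree (hv.1 i).1,
    ← prod_primeFactors_of_squarefree (squarefree_fiberProd hP _ i)]
  congr 1
  ext p
  rw [mem_primeFactors_fiberProd hP]
  constructor
  · rintro ⟨_, hp⟩
    split_ifs at hp with h
    exact Option.some_injective _ hp ▸ h.choose_spec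
  · intro hp
    have h : ∃ j, p ∈ (v j).primeFactors := ⟨i, hp⟩
    refine ⟨(hv.1 i).2 hp, ?_⟩
    rw [dif_pos h]
    by_contra hne
    exact disjoint_left.mp (hv.2 _ _ fun e => hne (congrArg some e)).disjoint_primeFactors
      h.choose_spec hp

variable [Fintype ι] {R : Type*} [CommSemiring R]

lemma prod_apply_fiberProd {f : ι → ArithmeticFunction R} (hf : ∀ i, (f i).IsMultiplicative)
    (g : P → Option ι) :
    ∏ i, f i (fiberProd g i) = ∏ p : P, (g p).elim 1 (f · p) := by
  calc ∏ i, f i (fiberProd g i)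
      = ∏ o : Option ι, ∏ p ∈ univ.filter (g · = o), o.elim 1 (f · p) := by
        rw [Fintype.prod_option]
        simp only [Option.elim_none, prod_const_one, one_mul, Option.elim_some]
        refine prod_congr rfl fun i _ => (hf i).map_prod _ _ fun p _ q _ hpq => ?_
        exact coprime_val_of_ne hP hpq
    _ = ∏ p : P, (g p).elim 1 (f · p) := by
        rw [← prod_fiberwise univ g (fun p => (g p).elim 1 (f · p))]
        exact prod_congr rfl fun o _ => prod_congr rfl fun p hp => by rw [(mem_filter.mp hp).2]

theorem tsum_ite_isCoprimeSquarefreeTuple [TopologicalSpace R] {f : ι → ArithmeticFunction R}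
    (hf : ∀ i, (f i).IsMultiplicative) :
    (∑' v : ι → ℕ, if IsCoprimeSquarefreeTuple P v then ∏ i, f i (v i) else 0) =
      ∏ p ∈ P, (1 + ∑ i, f i p) := by
  calc (∑' v : ι → ℕ, if IsCoprimeSquarefreeTuple P v then ∏ i, f i (v i) else 0)
      = ∑' g : P → Option ι, ∏ p : P, (g p).elim 1 (f · p) := by
        rw [← (fiberProd_injective hP).tsum_eq]
        · simp only [if_pos (isCoprimeSquarefreeTuple_fiberProd hP _), prod_apply_fiberProd hP hf]
        · intro v hv
          exact exists_fiberProd_eq hP (of_not_not fun h => hv (if_neg h))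
    _ = ∏ p ∈ P, (1 + ∑ i, f i p) := by
        rw [tsum_fintype, ← Fintype.prod_sum fun (p : P) (o : Option ι) => o.elim 1 (f · p),
          ← prod_coe_sort P]
        simp [Fintype.sum_option]

end PrimeAssignment

end Nat

lemma HasProd.ite_mem_finset_div_prod {α β : Type*} [CommGroupWithZero α] [TopologicalSpace α]
    [ContinuousMul α] {f : β → α} {a : α} (hf : HasProd f a) (s : Finset β)
    (hs : ∀ b ∈ s, f b ≠ 0) :
    HasProd (fun b => if b ∈ s then 1 else f b) (a / ∏ b ∈ s, f b) := by
  have hcorr : HasProd (fun b => if b ∈ s then (f b)⁻¹ else 1) (∏ b ∈ s, (f b)⁻¹) := by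
    rw [← prod_congr rfl fun b hb => if_pos hb]
    exact hasProd_prod_of_ne_finset_one fun b hb => if_neg hb
  convert hf.mul hcorr using 1
  · funext b
    split_ifs with hb
    · exact (mul_inv_cancel₀ (hs b hb)).symm
    · exact (mul_one _).symm
  · rw [prod_inv_distrib, div_eq_mul_inv]

lemma riemannZeta_re_eulerProduct_hasProd {s : ℝ} (hs : 1 < s) :
    HasProd (fun p : Nat.Primes => (1 - (p : ℝ) ^ (-s))⁻¹) (riemannZeta s).re := by
  have h := riemannZeta_eulerProduct_hasProd (s := s) (by simpa using hs)
  have hreal (p : Nat.Primes) :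
      (1 - (p : ℂ) ^ (-(s : ℂ)))⁻¹ = ((1 - (p : ℝ) ^ (-s))⁻¹ : ℝ) := by
    rw [Complex.ofReal_inv, Complex.ofReal_sub, Complex.ofReal_one,
      Complex.ofReal_cpow (Nat.cast_nonneg _), Complex.ofReal_neg, Complex.ofReal_natCast]
  simp only [hreal] at h
  unfold HasProd at h ⊢
  simpa only [← Complex.ofReal_prod, Function.comp_def, Complex.ofReal_re] using
    (Complex.continuous_re.tendsto _).comp h

lemma riemannZeta_eq_ofReal_re {s : ℝ} (hs : 1 < s) : riemannZeta s = (riemannZeta s).re :=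
  Complex.ext (by simp) (by simp [riemannZeta_im_eq_zero_of_one_lt hs])

noncomputable def primesLT (X : ℝ) : Finset ℕ :=
  Finset.filter (fun p : ℕ => p.Prime ∧ (p : ℝ) < X) (Finset.range (⌈X⌉₊ + 1))

lemma mem_primesLT {X : ℝ} {p : ℕ} : p ∈ primesLT X ↔ p.Prime ∧ (p : ℝ) < X := by
  rw [primesLT, mem_filter, mem_range, and_iff_right_iff_imp]
  exact fun h => Nat.lt_succ_of_lt (Nat.lt_ceil.mpr h.2)

lemma xAdmissible_iff {X : ℝ} {n : ℕ} :
    XAdmissible X n ↔ Squarefree n ∧ n.primeFactors ⊆ primesLT X := by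
  refine and_congr_right fun hn => ⟨fun h p hp => ?_, fun h p hp hpn => ?_⟩
  · have hp' := Nat.prime_of_mem_primeFactors hp
    exact mem_primesLT.mpr ⟨hp', h p hp' (Nat.dvd_of_mem_primeFactors hp)⟩
  · exact (mem_primesLT.mp (h (Nat.mem_primeFactors.mpr ⟨hp, hpn, hn.ne_zero⟩))).2

lemma one_sub_rpow_neg_inv_ne_zero {s : ℝ} (hs : 0 < s) {p : ℕ} (hp : 1 < p) :
    (1 - (p : ℝ) ^ (-s))⁻¹ ≠ 0 :=
  inv_ne_zero (sub_ne_zero.mpr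
    (Real.rpow_lt_one_of_one_lt_of_neg (by exact_mod_cast hp) (neg_neg_of_pos hs)).ne')

lemma tprod_ite_le_eulerFactor_eq {s : ℝ} (hs : 1 < s) (X : ℝ) :
    (∏' p : Nat.Primes, if X ≤ ((p : ℕ) : ℝ) then (1 - ((p : ℕ) : ℝ) ^ (-s))⁻¹ else 1) =
      (riemannZeta s).re / ∏ p ∈ primesLT X, (1 - (p : ℝ) ^ (-s))⁻¹ := by
  have hinj : Set.InjOn ((↑) : Nat.Primes → ℕ)
      (((↑) : Nat.Primes → ℕ) ⁻¹' (primesLT X : Set ℕ)) :=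
    Subtype.val_injective.injOn
  have h := (riemannZeta_re_eulerProduct_hasProd hs).ite_mem_finset_div_prod
    ((primesLT X).preimage _ hinj) fun p _ => one_sub_rpow_neg_inv_ne_zero (by linarith) p.2.one_lt
  have hS : ∏ p ∈ (primesLT X).preimage _ hinj, (1 - ((p : ℕ) : ℝ) ^ (-s))⁻¹ =
      ∏ p ∈ primesLT X, (1 - (p : ℝ) ^ (-s))⁻¹ :=
    prod_preimage _ _ hinj (fun p : ℕ => (1 - (p : ℝ) ^ (-s))⁻¹)
      fun p hp hrange => (hrange ⟨⟨p, (mem_primesLT.mp hp).1⟩, rfl⟩).elim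
  refine (tprod_congr fun p => ?_).trans (h.tprod_eq.trans (congrArg (_ / ·) hS))
  have hmem : p ∈ (primesLT X).preimage _ hinj ↔ ¬X ≤ (p : ℝ) :=
    mem_preimage.trans (mem_primesLT.trans ((and_iff_right p.2).trans not_le.symm))
  by_cases hp : X ≤ (p : ℝ)
  · exact (if_pos hp).trans (if_neg fun h => hmem.mp h hp).symm
  · exact (if_neg hp).trans (if_pos (hmem.mpr hp)).symm

namespace ArithmeticFunction

noncomputable def natRpow (s : ℝ) : ArithmeticFunction ℝ :=
  ⟨fun n => if n = 0 then 0 else (n : ℝ) ^ s, if_pos rfl⟩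

lemma natRpow_apply {s : ℝ} {n : ℕ} (hn : n ≠ 0) : natRpow s n = (n : ℝ) ^ s := if_neg hn

lemma isMultiplicative_natRpow (s : ℝ) : (natRpow s).IsMultiplicative := by
  refine IsMultiplicative.iff_ne_zero.mpr ⟨by simp [natRpow_apply], fun hm hn _ => ?_⟩
  rw [natRpow_apply (mul_ne_zero hm hn), natRpow_apply hm, natRpow_apply hn, Nat.cast_mul,
    Real.mul_rpow (Nat.cast_nonneg _) (Nat.cast_nonneg _)]

end ArithmeticFunction

open ArithmeticFunction

/-- Coordinates `0, …, 6` carry the weights of `k₁, k₂, c, s₂, s₁, m, n`. -/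
noncomputable def sevenfoldWeight (σ : ℝ) : Fin 7 → ArithmeticFunction ℝ :=
  ![natRpow (-(4 * σ)), natRpow (-(6 * σ)), natRpow (-(6 * σ)), natRpow (-(4 * σ)),
    natRpow (-(2 * σ)), (moebius : ArithmeticFunction ℝ).pmul (natRpow (-(2 * σ))),
    (moebius : ArithmeticFunction ℝ).pmul (natRpow (-(2 * σ)))]

lemma isMultiplicative_sevenfoldWeight (σ : ℝ) (i : Fin 7) :
    (sevenfoldWeight σ i).IsMultiplicative := by
  have hμ := isMultiplicative_moebius.intCast.pmul (isMultiplicative_natRpow (-(2 * σ)))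
  fin_cases i <;> simp [sevenfoldWeight, isMultiplicative_natRpow, hμ]

lemma prod_sevenfoldWeight (σ : ℝ) {v : Fin 7 → ℕ} (hv : ∀ i, v i ≠ 0) :
    ∏ i, sevenfoldWeight σ i (v i) =
      (moebius (v 5) : ℝ) * (moebius (v 6) : ℝ) *
        (v 0 : ℝ) ^ (-(4 * σ)) * (v 1 : ℝ) ^ (-(6 * σ)) * (v 2 : ℝ) ^ (-(6 * σ)) *
        (v 3 : ℝ) ^ (-(4 * σ)) * (v 4 : ℝ) ^ (-(2 * σ)) *
        (v 5 : ℝ) ^ (-(2 * σ)) * (v 6 : ℝ) ^ (-(2 * σ)) := by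
  simp [Fin.prod_univ_seven, sevenfoldWeight, natRpow_apply, hv]
  ring

lemma one_add_sum_sevenfoldWeight (σ : ℝ) {p : ℕ} (hp : p.Prime) :
    1 + ∑ i, sevenfoldWeight σ i p =
      1 + 2 * (p : ℝ) ^ (-(4 * σ)) + 2 * (p : ℝ) ^ (-(6 * σ)) - (p : ℝ) ^ (-(2 * σ)) := by
  simp [Fin.sum_univ_seven, sevenfoldWeight, natRpow_apply, hp.ne_zero, moebius_apply_prime hp]
  ring

lemma eulerFactor_mul_one_add_sum_sevenfoldWeight {σ : ℝ} (hσ : 1 / 2 < σ) {p : ℕ}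
    (hp : p.Prime) :
    (1 - (p : ℝ) ^ (-(2 * σ)))⁻¹ * (1 + ∑ i, sevenfoldWeight σ i p) =
      1 + 2 * ((p : ℝ) ^ (2 * σ) + 1) / ((p : ℝ) ^ (4 * σ) * ((p : ℝ) ^ (2 * σ) - 1)) := by
  have hp0 : (0 : ℝ) ≤ p := Nat.cast_nonneg p
  have hu : 1 < (p : ℝ) ^ (2 * σ) :=
    Real.one_lt_rpow (by exact_mod_cast hp.one_lt) (by linarith)
  have hpow (k : ℕ) : (p : ℝ) ^ (2 * k * σ) = ((p : ℝ) ^ (2 * σ)) ^ k := by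
    rw [← Real.rpow_natCast, ← Real.rpow_mul hp0]
    ring_nf
  rw [one_add_sum_sevenfoldWeight σ hp, Real.rpow_neg hp0, Real.rpow_neg hp0, Real.rpow_neg hp0,
    show 4 * σ = 2 * (2 : ℕ) * σ by push_cast; ring,
    show 6 * σ = 2 * (3 : ℕ) * σ by push_cast; ring, hpow, hpow]
  set u := (p : ℝ) ^ (2 * σ)
  have hu0 : u ≠ 0 := by positivity
  have hu1 : u - 1 ≠ 0 := by linarith
  field_simp
  ring

lemma tsum_sevenfold_eq_prod (X σ : ℝ) :
    (∑' v : Fin 7 → ℕ,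
        if (∀ i, XAdmissible X (v i)) ∧ (∀ i j, i ≠ j → Nat.Coprime (v i) (v j)) then
          ((ArithmeticFunction.moebius (v 5) : ℝ) *
            (ArithmeticFunction.moebius (v 6) : ℝ) *
            (v 0 : ℝ) ^ (-(4 * σ)) * (v 1 : ℝ) ^ (-(6 * σ)) * (v 2 : ℝ) ^ (-(6 * σ)) *
            (v 3 : ℝ) ^ (-(4 * σ)) * (v 4 : ℝ) ^ (-(2 * σ)) *
            (v 5 : ℝ) ^ (-(2 * σ)) * (v 6 : ℝ) ^ (-(2 * σ)))
        else 0 : ℝ) =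
      ∏ p ∈ primesLT X, (1 + ∑ i, sevenfoldWeight σ i p) := by
  rw [← Nat.tsum_ite_isCoprimeSquarefreeTuple (fun p hp => (mem_primesLT.mp hp).1)
    (isMultiplicative_sevenfoldWeight σ)]
  refine tsum_congr fun v => ?_
  have hcond : ((∀ i, XAdmissible X (v i)) ∧ ∀ i j, i ≠ j → Nat.Coprime (v i) (v j)) ↔
      Nat.IsCoprimeSquarefreeTuple (primesLT X) v := by
    simp only [xAdmissible_iff, Nat.IsCoprimeSquarefreeTuple]
  by_cases hv : Nat.IsCoprimeSquarefreeTuple (primesLT X) v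
  · rw [if_pos (hcond.mpr hv), if_pos hv, prod_sevenfoldWeight σ fun i => (hv.1 i).1.ne_zero]
  · rw [if_neg (mt hcond.mp hv), if_neg hv]

theorem zeta_times_sevenfold_sum_eq_euler_products_general
    (X σ : ℝ) (hσ : 1 / 2 < σ) :
    (riemannZeta ((2 * σ : ℝ) : ℂ)) *
      ((∑' v : Fin 7 → ℕ,
          if (∀ i, XAdmissible X (v i)) ∧ (∀ i j, i ≠ j → Nat.Coprime (v i) (v j)) then
            ((ArithmeticFunction.moebius (v 5) : ℝ) *
              (ArithmeticFunction.moebius (v 6) : ℝ) *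
              (v 0 : ℝ) ^ (-(4 * σ)) * (v 1 : ℝ) ^ (-(6 * σ)) * (v 2 : ℝ) ^ (-(6 * σ)) *
              (v 3 : ℝ) ^ (-(4 * σ)) * (v 4 : ℝ) ^ (-(2 * σ)) *
              (v 5 : ℝ) ^ (-(2 * σ)) * (v 6 : ℝ) ^ (-(2 * σ)))
          else 0 : ℝ) : ℂ) =
    (((∏' p : Nat.Primes, if X ≤ ((p : ℕ) : ℝ) then (1 - ((p : ℕ) : ℝ) ^ (-(2 * σ)))⁻¹ else 1) *
      ∏ p ∈ Finset.filter (fun p : ℕ => p.Prime ∧ (p : ℝ) < X) (Finset.range (⌈X⌉₊ + 1)),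
        (1 + 2 * ((p : ℝ) ^ (2 * σ) + 1) / ((p : ℝ) ^ (4 * σ) * ((p : ℝ) ^ (2 * σ) - 1))) : ℝ) : ℂ) := by
  have h2σ : 1 < 2 * σ := by linarith
  have hsmall : ∏ p ∈ primesLT X, (1 - (p : ℝ) ^ (-(2 * σ)))⁻¹ ≠ 0 := prod_ne_zero_iff.mpr
    fun p hp => one_sub_rpow_neg_inv_ne_zero (by linarith) (mem_primesLT.mp hp).1.one_lt
  change _ = ((_ * ∏ p ∈ primesLT X, _ : ℝ) : ℂ)
  rw [riemannZeta_eq_ofReal_re h2σ, tsum_sevenfold_eq_prod, ← Complex.ofReal_mul,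
    tprod_ite_le_eulerFactor_eq h2σ, ← prod_congr rfl fun p hp =>
      eulerFactor_mul_one_add_sum_sevenfoldWeight hσ (mem_primesLT.mp hp).1,
    prod_mul_distrib, ← mul_assoc, div_mul_cancel₀ _ hsmall]

theorem zeta_times_sevenfold_sum_eq_euler_products
    (X σ : ℝ) (hX : 2 ≤ X) (hσ : 1 / 2 < σ) :
    (riemannZeta ((2 * σ : ℝ) : ℂ)) *
      ((∑' v : Fin 7 → ℕ,
          if (∀ i, XAdmissible X (v i)) ∧ (∀ i j, i ≠ j → Nat.Coprime (v i) (v j)) then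
            ((ArithmeticFunction.moebius (v 5) : ℝ) *
              (ArithmeticFunction.moebius (v 6) : ℝ) *
              (v 0 : ℝ) ^ (-(4 * σ)) * (v 1 : ℝ) ^ (-(6 * σ)) * (v 2 : ℝ) ^ (-(6 * σ)) *
              (v 3 : ℝ) ^ (-(4 * σ)) * (v 4 : ℝ) ^ (-(2 * σ)) *
              (v 5 : ℝ) ^ (-(2 * σ)) * (v 6 : ℝ) ^ (-(2 * σ)))
          else 0 : ℝ) : ℂ) =
    (((∏' p : Nat.Primes, if X ≤ ((p : ℕ) : ℝ) then (1 - ((p : ℕ) : ℝ) ^ (-(2 * σ)))⁻¹ else 1) *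
      ∏ p ∈ Finset.filter (fun p : ℕ => p.Prime ∧ (p : ℝ) < X) (Finset.range (⌈X⌉₊ + 1)),
        (1 + 2 * ((p : ℝ) ^ (2 * σ) + 1) / ((p : ℝ) ^ (4 * σ) * ((p : ℝ) ^ (2 * σ) - 1))) : ℝ) : ℂ) :=
  zeta_times_sevenfold_sum_eq_euler_products_general X σ hσ
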